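/- Let (T, f) be a depth-decomposition of a vector matroid M = (X, I) of depth d. Then there exists a depth-decomposition (T', f') of M of depth at most d such that every primary branch of T' is at capacity. -/

import Mathlib

/-! Infrastructure: rooted trees, depth-decompositions and branch-depth of matroids,
following the definitions of Kardoš, Král', Liebenau, Mach and of the paper
"Optimal matrix tree-depth and a row-invariant parameterized algorithm for
integer programming". -/

/-- A rooted tree on a (nonempty) finite vertex type `V`, given by its root and its
parent function: the parent of the root is the root itself, and from any vertex the
root is reached by iterating the parent function. -/
structure RTree (V : Type) [Fintype V] [DecidableEq V] where
  root : V
  parent : V → V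
  parent_root : parent root = root
  reach : ∀ v : V, ∃ n : ℕ, parent^[n] v = root

namespace RTree

variable {V : Type} [Fintype V] [DecidableEq V]

/-- A vertex is a leaf if it has no children. -/
def IsLeaf (T : RTree V) (v : V) : Prop :=
  ∀ u : V, T.parent u = v → u = v

/-- The non-root vertices on the path from `v` to the root of `T`; they are in bijective
correspondence with the edges of this path (each such vertex corresponds to the edge
joining it to its parent). -/
def pathEdges (T : RTree V) (v : V) : Set V :=
  {u | u ≠ T.root ∧ ∃ n : ℕ, T.parent^[n] v = u}

/-- The number of edges of the tree. -/
def edgeCount (T : RTree V) : ℕ := Fintype.card V - 1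

/-- The depth of a vertex: the number of edges on the path from the root to it. -/
noncomputable def depthV (T : RTree V) (v : V) : ℕ :=
  sInf {n : ℕ | T.parent^[n] v = T.root}

/-- The depth of the tree: the maximum number of edges on a path from the root to a leaf. -/
noncomputable def depth (T : RTree V) : ℕ :=
  Finset.univ.sup T.depthV

/-- The descendants of a vertex `u` (including `u` itself). -/
def desc (T : RTree V) (u : V) : Set V := {w | ∃ n : ℕ, T.parent^[n] w = u}

/-- The number of children of a vertex. -/
noncomputable def childCount (T : RTree V) (u : V) : ℕ :=
  {w : V | T.parent w = u ∧ w ≠ u}.ncard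

/-- A rooted tree is a rooted path if every vertex has at most one child. -/
def IsRootedPath (T : RTree V) : Prop := ∀ u : V, T.childCount u ≤ 1

/-- `a` is a strict ancestor of `v`. -/
def IsStrictAncestor (T : RTree V) (a v : V) : Prop :=
  a ≠ v ∧ ∃ n : ℕ, T.parent^[n] v = a

/-- A branch of `T` consists of a vertex `u`, exactly one child `u'` of `u` and all
descendants of `u'`; it is hence determined by the non-root vertex `u'` and denoted
here by `u'`.  Its root is `parent u'`, its vertex set is `{parent u'} ∪ desc u'`, and
its edge number `‖S‖` is `(desc u').ncard`.  The branch determined by `u'` is primary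
if its root has at least two children and every (strict) ancestor of its root has
exactly one child. -/
def IsPrimaryBranch (T : RTree V) (u' : V) : Prop :=
  u' ≠ T.root ∧ 2 ≤ T.childCount (T.parent u') ∧
    ∀ a : V, T.IsStrictAncestor a (T.parent u') → T.childCount a = 1

end RTree

/-- `(T, f)` is a depth-decomposition of the matroid on ground set `X` with rank
function `rk` and rank `r`: `f` maps elements of the matroid to leaves of `T`, the
number of edges of `T` equals the rank `r` of the matroid, and the rank of every
`X' ⊆ X` is at most the number of edges contained in the union of the paths in `T`
from the root to the vertices `f x`, `x ∈ X'`. -/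
def IsDepthDecompOn {X V : Type} [Fintype V] [DecidableEq V]
    (rk : Set X → ℕ) (r : ℕ) (T : RTree V) (f : X → V) : Prop :=
  (∀ x : X, T.IsLeaf (f x)) ∧ T.edgeCount = r ∧
    ∀ X' : Set X, rk X' ≤ (⋃ x ∈ X', T.pathEdges (f x)).ncard

/-- The branch-depth of the matroid on ground set `X` with rank function `rk` and
rank `r`: the smallest depth of a rooted tree forming a depth-decomposition. -/
noncomputable def branchDepth {X : Type} (rk : Set X → ℕ) (r : ℕ) : ℕ :=
  sInf {d : ℕ | ∃ (nV : ℕ) (T : RTree (Fin (nV + 1))) (f : X → Fin (nV + 1)),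
    IsDepthDecompOn rk r T f ∧ T.depth = d}

/-- The branch of `T` determined by the non-root vertex `u'` is at capacity: the rank
of the set `Ŝ` of matroid elements mapped by `f` to the leaves of the branch equals the
number `‖S‖` of edges of the branch plus the number of edges on the path from the root
of `T` to the root of the branch. -/
def AtCapacity {X V : Type} [Fintype V] [DecidableEq V]
    (rk : Set X → ℕ) (T : RTree V) (f : X → V) (u' : V) : Prop :=
  rk {x | f x ∈ T.desc u'} = (T.desc u').ncard + T.depthV (T.parent u')

/-- The rank function of the vector matroid formed by the family of vectors `v`:
the rank of a subset is the dimension of its linear hull. -/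
noncomputable def vecRk (F : Type) {W ι : Type} [Field F] [AddCommGroup W] [Module F W]
    (v : ι → W) (S : Set ι) : ℕ :=
  Module.finrank F (Submodule.span F (v '' S))

/-- `(T, f, g)` is an extended depth-decomposition of the vector matroid formed by the
family of vectors `v`: `(T, f)` is a depth-decomposition, the images under `g` of the
non-root vertices of `T` form a basis of the linear hull of the vectors, and every
vector `v x` lies in the linear hull of the `g`-image of the non-root vertices on the
path from `f x` to the root. -/
def IsExtDepthDecomp (F : Type) {W ι V : Type} [Field F] [AddCommGroup W] [Module F W]
    [Fintype V] [DecidableEq V] (v : ι → W) (T : RTree V) (f : ι → V) (g : V → W) : Prop :=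
  IsDepthDecompOn (vecRk F v) (vecRk F v Set.univ) T f ∧
  LinearIndependent F (fun u : {u : V // u ≠ T.root} => g u.val) ∧
  Submodule.span F (g '' {u : V | u ≠ T.root}) = Submodule.span F (Set.range v) ∧
  ∀ x : ι, v x ∈ Submodule.span F (g '' T.pathEdges (f x))

/-! Lift a primary branch that is below capacity by one level: if `S` hangs from `b`, reattach
its top vertex to the parent of `b`. For `Y ⊆ Ŝ`, submodularity of the rank applied to `Y ∪ Ŝᶜ`
and `Ŝ` gives `rk Y + |S| ≤ |paths of Y inside S| + rk Ŝ`, and `rk Ŝ < |S| + depth b` since `S`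
is below capacity; so the paths of `Y`, which lose exactly the edge above `b`, still carry
`rk Y` edges. A set meeting `Ŝᶜ` keeps that edge, because every leaf lies below `b`. The lift
keeps a depth-decomposition, does not increase the depth and strictly decreases the total depth
of the vertices, so lifting repeatedly ends with all primary branches at capacity. -/

theorem Function.iterate_update_of_forall_ne {α : Type*} [DecidableEq α] {f : α → α} {w p x : α}
    {n : ℕ} (h : ∀ i < n, f^[i] x ≠ w) : (Function.update f w p)^[n] x = f^[n] x := by
  induction n with
  | zero => rfl
  | succ n ih =>
    rw [Function.iterate_succ_apply', Function.iterate_succ_apply', ih fun i hi => h i (by omega),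
      Function.update_of_ne (h n (by omega))]

namespace RTree

variable {V : Type} [Fintype V] [DecidableEq V] (T : RTree V)

theorem mem_desc {u a : V} : u ∈ T.desc a ↔ ∃ n, T.parent^[n] u = a := Iff.rfl

theorem mem_pathEdges {u a : V} : a ∈ T.pathEdges u ↔ a ≠ T.root ∧ u ∈ T.desc a := Iff.rfl

theorem iterate_parent_root (n : ℕ) : T.parent^[n] T.root = T.root :=
  Function.iterate_fixed T.parent_root n

theorem mem_desc_root (u : V) : u ∈ T.desc T.root := T.reach u

theorem mem_desc_self (u : V) : u ∈ T.desc u := ⟨0, rfl⟩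

theorem mem_desc_parent (u : V) : u ∈ T.desc (T.parent u) := ⟨1, rfl⟩

theorem mem_desc_of_parent_mem_desc {u a : V} (h : T.parent u ∈ T.desc a) : u ∈ T.desc a := by
  obtain ⟨n, hn⟩ := h
  exact ⟨n + 1, by rwa [Function.iterate_succ_apply]⟩

theorem mem_desc_trans {u a b : V} (hu : u ∈ T.desc a) (ha : a ∈ T.desc b) : u ∈ T.desc b := by
  obtain ⟨m, rfl⟩ := hu
  obtain ⟨n, rfl⟩ := ha
  exact ⟨n + m, Function.iterate_add_apply _ _ _ _⟩

theorem parent_mem_desc {w a : V} (hw : w ∈ T.desc a) (hne : w ≠ a) : T.parent w ∈ T.desc a := by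
  obtain ⟨_ | n, rfl⟩ := hw
  · exact absurd rfl hne
  · exact ⟨n, (Function.iterate_succ_apply _ _ _).symm⟩

theorem eq_root_of_root_mem_desc {a : V} (h : T.root ∈ T.desc a) : a = T.root := by
  obtain ⟨n, rfl⟩ := h
  exact T.iterate_parent_root n

theorem eq_root_of_iterate_eq_self {w : V} {n : ℕ} (hn : 0 < n) (h : T.parent^[n] w = w) :
    w = T.root := by
  obtain ⟨N, hN⟩ := T.reach w
  have hper : T.parent^[n * N] w = w := Function.IsPeriodicPt.mul_const h N
  calc w = T.parent^[n * N - N] (T.parent^[N] w) := by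
        rw [← Function.iterate_add_apply, Nat.sub_add_cancel (Nat.le_mul_of_pos_left N hn), hper]
    _ = T.root := by rw [hN, iterate_parent_root]

theorem parent_ne_self {w : V} (hw : w ≠ T.root) : T.parent w ≠ w :=
  fun h => hw (T.eq_root_of_iterate_eq_self one_pos h)

theorem eq_of_mem_desc_of_mem_desc {a b : V} (hab : a ∈ T.desc b) (hba : b ∈ T.desc a) :
    a = b := by
  obtain ⟨i, rfl⟩ := hab
  obtain ⟨j, hj⟩ := hba
  rcases Nat.eq_zero_or_pos (j + i) with h | h
  · obtain rfl : i = 0 := by omega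
    rfl
  · rw [T.eq_root_of_iterate_eq_self (w := a) h (by rwa [Function.iterate_add_apply]),
      iterate_parent_root]

theorem iterate_injective {u : V} {i j : ℕ} (h : T.parent^[i] u = T.parent^[j] u)
    (hne : T.parent^[i] u ≠ T.root) : i = j := by
  by_contra hij
  apply hne
  rcases Nat.lt_or_gt_of_ne hij with hlt | hlt
  · apply T.eq_root_of_iterate_eq_self (Nat.sub_pos_of_lt hlt)
    rw [← Function.iterate_add_apply, Nat.sub_add_cancel hlt.le, h]
  · rw [h]
    apply T.eq_root_of_iterate_eq_self (Nat.sub_pos_of_lt hlt)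
    rw [← Function.iterate_add_apply, Nat.sub_add_cancel hlt.le, h]

theorem mem_desc_total {u a b : V} (ha : u ∈ T.desc a) (hb : u ∈ T.desc b) :
    a ∈ T.desc b ∨ b ∈ T.desc a := by
  obtain ⟨i, rfl⟩ := ha
  obtain ⟨j, rfl⟩ := hb
  rcases le_total i j with h | h
  · exact Or.inl ⟨j - i, by rw [← Function.iterate_add_apply, Nat.sub_add_cancel h]⟩
  · exact Or.inr ⟨i - j, by rw [← Function.iterate_add_apply, Nat.sub_add_cancel h]⟩

@[elab_as_elim]
theorem induction_parent {motive : V → Prop} (hroot : motive T.root)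
    (hparent : ∀ u, u ≠ T.root → motive (T.parent u) → motive u) (u : V) : motive u := by
  obtain ⟨n, hn⟩ := T.reach u
  induction n generalizing u with
  | zero =>
    rw [show u = T.root from hn]
    exact hroot
  | succ n ih =>
    by_cases hu : u = T.root
    · exact hu ▸ hroot
    · exact hparent u hu (ih _ (by rwa [Function.iterate_succ_apply] at hn))

theorem exists_child_of_mem_desc {a b : V} (hb : b ∈ T.desc a) (hne : b ≠ a) :
    ∃ z, T.parent z = a ∧ z ≠ a ∧ b ∈ T.desc z := by
  obtain ⟨n, hn⟩ := hb
  induction n generalizing b with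
  | zero => exact absurd hn hne
  | succ n ih =>
    rw [Function.iterate_succ_apply] at hn
    by_cases hpb : T.parent b = a
    · exact ⟨b, hpb, hne, T.mem_desc_self b⟩
    · obtain ⟨z, hz, hza, hbz⟩ := ih hpb hn
      exact ⟨z, hz, hza, T.mem_desc_of_parent_mem_desc hbz⟩

theorem IsLeaf.eq_of_mem_desc {T : RTree V} {a w : V} (ha : T.IsLeaf a) (hw : w ∈ T.desc a) :
    w = a := by
  obtain ⟨n, hn⟩ := hw
  induction n generalizing w with
  | zero => exact hn
  | succ n ih => exact ih (ha _ (by rwa [Function.iterate_succ_apply'] at hn))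

theorem mem_desc_or_mem_desc_of_childCount_eq_one {b : V}
    (h : ∀ a, T.IsStrictAncestor a b → T.childCount a = 1) (u : V) :
    u ∈ T.desc b ∨ b ∈ T.desc u := by
  induction u using T.induction_parent with
  | hroot => exact Or.inr (T.mem_desc_root b)
  | hparent u hu ih =>
    rcases ih with hp | hp
    · exact Or.inl (T.mem_desc_of_parent_mem_desc hp)
    by_cases hpb : T.parent u = b
    · exact Or.inl ⟨1, hpb⟩
    obtain ⟨z, hz, hza, hbz⟩ := T.exists_child_of_mem_desc hp (Ne.symm hpb)
    obtain ⟨c, hc⟩ := Set.ncard_eq_one.mp (h _ ⟨hpb, hp⟩)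
    have hzc : z ∈ ({c} : Set V) := hc ▸ ⟨hz, hza⟩
    have huc : u ∈ ({c} : Set V) := hc ▸ ⟨rfl, (T.parent_ne_self hu).symm⟩
    rw [Set.mem_singleton_iff] at hzc huc
    exact Or.inr (huc ▸ hzc ▸ hbz)

theorem IsPrimaryBranch.mem_desc_parent_of_isLeaf {T : RTree V} {u a : V}
    (hu : T.IsPrimaryBranch u) (ha : T.IsLeaf a) : a ∈ T.desc (T.parent u) := by
  rcases T.mem_desc_or_mem_desc_of_childCount_eq_one hu.2.2 a with h | h
  · exact h
  · rw [← ha.eq_of_mem_desc (T.mem_desc_trans (T.mem_desc_parent u) h)]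
    exact T.mem_desc_parent u

theorem pathEdges_root : T.pathEdges T.root = ∅ :=
  Set.eq_empty_of_forall_notMem fun _ ha => ha.1 (T.eq_root_of_root_mem_desc ha.2)

theorem pathEdges_eq_insert {u : V} (hu : u ≠ T.root) :
    T.pathEdges u = insert u (T.pathEdges (T.parent u)) := by
  ext a
  simp only [Set.mem_insert_iff, mem_pathEdges]
  constructor
  · rintro ⟨ha, hua⟩
    by_cases h : u = a
    · exact Or.inl h.symm
    · exact Or.inr ⟨ha, T.parent_mem_desc hua h⟩
  · rintro (rfl | ⟨ha, hpa⟩)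
    · exact ⟨hu, T.mem_desc_self a⟩
    · exact ⟨ha, T.mem_desc_of_parent_mem_desc hpa⟩

theorem notMem_pathEdges_parent {u : V} (hu : u ≠ T.root) : u ∉ T.pathEdges (T.parent u) :=
  fun h => T.parent_ne_self hu (T.eq_of_mem_desc_of_mem_desc h.2 (T.mem_desc_parent u))

theorem pathEdges_subset_pathEdges {u a : V} (h : u ∈ T.desc a) :
    T.pathEdges a ⊆ T.pathEdges u :=
  fun _ hb => ⟨hb.1, T.mem_desc_trans h hb.2⟩

theorem pathEdges_subset_of_mem_desc {u w : V} (hu : u ∈ T.desc w) :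
    T.pathEdges u ⊆ (T.pathEdges u ∩ T.desc w) ∪ T.pathEdges (T.parent w) := by
  rintro a ⟨ha, hua⟩
  rcases T.mem_desc_total hua hu with h | h
  · exact Or.inl ⟨⟨ha, hua⟩, h⟩
  by_cases haw : a = w
  · exact Or.inl ⟨⟨ha, hua⟩, haw ▸ T.mem_desc_self a⟩
  · exact Or.inr ⟨ha, T.parent_mem_desc h (Ne.symm haw)⟩

theorem iterate_eq_root_iff {u : V} {n : ℕ} : T.parent^[n] u = T.root ↔ T.depthV u ≤ n := by
  refine ⟨fun h => Nat.sInf_le h, fun h => ?_⟩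
  rw [← Nat.sub_add_cancel h, Function.iterate_add_apply,
    show T.parent^[T.depthV u] u = T.root from Nat.sInf_mem (T.reach u), iterate_parent_root]

theorem depthV_root : T.depthV T.root = 0 :=
  Nat.le_zero.mp (T.iterate_eq_root_iff.mp rfl)

theorem depthV_parent_add_one {u : V} (hu : u ≠ T.root) :
    T.depthV u = T.depthV (T.parent u) + 1 := by
  have key : ∀ n, T.depthV u ≤ n + 1 ↔ T.depthV (T.parent u) ≤ n := fun n => by
    rw [← iterate_eq_root_iff, ← iterate_eq_root_iff, Function.iterate_succ_apply]
  have hpos : T.depthV u ≠ 0 := fun h => hu (T.iterate_eq_root_iff.mpr h.le)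
  obtain ⟨j, hj⟩ := Nat.exists_eq_succ_of_ne_zero hpos
  have h₁ := (key j).mp hj.le
  have h₂ := (key (T.depthV (T.parent u))).mpr le_rfl
  omega

theorem ncard_pathEdges (u : V) : (T.pathEdges u).ncard = T.depthV u := by
  induction u using T.induction_parent with
  | hroot => rw [pathEdges_root, depthV_root, Set.ncard_empty]
  | hparent u hu ih =>
    rw [pathEdges_eq_insert T hu, Set.ncard_insert_of_notMem (T.notMem_pathEdges_parent hu), ih,
      depthV_parent_add_one T hu]

section Regraft

variable {w p : V}

theorem ne_root_of_isStrictAncestor (h : T.IsStrictAncestor p w) : w ≠ T.root := by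
  rintro rfl
  exact h.1 (T.eq_root_of_root_mem_desc h.2)

theorem notMem_desc_of_isStrictAncestor (h : T.IsStrictAncestor p w) : p ∉ T.desc w :=
  fun hp => h.1 (T.eq_of_mem_desc_of_mem_desc hp h.2)

theorem iterate_update_of_notMem_desc {u : V} (hu : u ∉ T.desc w) (n : ℕ) :
    (Function.update T.parent w p)^[n] u = T.parent^[n] u :=
  Function.iterate_update_of_forall_ne fun i _ hi => hu ⟨i, hi⟩

/-- By acyclicity the path from `u` meets `w` only at step `m`. -/
theorem iterate_update_of_le (hw : w ≠ T.root) {u : V} {m n : ℕ} (hm : T.parent^[m] u = w)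
    (hn : n ≤ m) : (Function.update T.parent w p)^[n] u = T.parent^[n] u :=
  Function.iterate_update_of_forall_ne fun i hi hiw => by
    have := T.iterate_injective (hiw.trans hm.symm) (hiw ▸ hw)
    omega

theorem iterate_update_add (h : T.IsStrictAncestor p w) {u : V} {m : ℕ}
    (hm : T.parent^[m] u = w) (j : ℕ) :
    (Function.update T.parent w p)^[j + (m + 1)] u = T.parent^[j] p := by
  rw [Function.iterate_add_apply, Function.iterate_succ_apply',
    T.iterate_update_of_le (T.ne_root_of_isStrictAncestor h) hm le_rfl, hm, Function.update_self,
    T.iterate_update_of_notMem_desc (T.notMem_desc_of_isStrictAncestor h)]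

def regraft (w p : V) (h : T.IsStrictAncestor p w) : RTree V where
  root := T.root
  parent := Function.update T.parent w p
  parent_root := by
    rw [Function.update_of_ne (T.ne_root_of_isStrictAncestor h).symm, T.parent_root]
  reach u := by
    by_cases hu : u ∈ T.desc w
    · obtain ⟨m, hm⟩ := hu
      obtain ⟨j, hj⟩ := T.reach p
      exact ⟨j + (m + 1), by rw [T.iterate_update_add h hm, hj]⟩
    · obtain ⟨n, hn⟩ := T.reach u
      exact ⟨n, by rw [T.iterate_update_of_notMem_desc hu, hn]⟩

variable (h : T.IsStrictAncestor p w)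

theorem regraft_root : (T.regraft w p h).root = T.root := rfl

theorem regraft_parent : (T.regraft w p h).parent = Function.update T.parent w p := rfl

theorem mem_desc_regraft_of_mem_desc {u a : V} (hu : u ∈ T.desc w) :
    u ∈ (T.regraft w p h).desc a ↔ (u ∈ T.desc a ∧ a ∈ T.desc w) ∨ p ∈ T.desc a := by
  have hw := T.ne_root_of_isStrictAncestor h
  obtain ⟨m, hm⟩ := hu
  simp only [mem_desc, regraft_parent]
  constructor
  · rintro ⟨n, hn⟩
    rcases le_or_gt n m with hnm | hnm
    · rw [T.iterate_update_of_le hw hm hnm] at hn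
      refine Or.inl ⟨⟨n, hn⟩, m - n, ?_⟩
      rw [← hn, ← Function.iterate_add_apply, Nat.sub_add_cancel hnm, hm]
    · obtain ⟨j, rfl⟩ : ∃ j, n = j + (m + 1) := ⟨n - (m + 1), by omega⟩
      rw [T.iterate_update_add h hm] at hn
      exact Or.inr ⟨j, hn⟩
  · rintro (⟨⟨n, hn⟩, j, hj⟩ | ⟨j, hj⟩)
    · have hjn : T.parent^[j + n] u = T.parent^[m] u := by
        rw [Function.iterate_add_apply, hn, hj, hm]
      have := T.iterate_injective hjn (hjn.trans hm ▸ hw)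
      exact ⟨n, by rw [T.iterate_update_of_le hw hm (by omega), hn]⟩
    · exact ⟨j + (m + 1), by rw [T.iterate_update_add h hm, hj]⟩

theorem pathEdges_regraft_of_notMem_desc {u : V} (hu : u ∉ T.desc w) :
    (T.regraft w p h).pathEdges u = T.pathEdges u := by
  ext a
  simp only [mem_pathEdges, mem_desc, regraft_root, regraft_parent,
    T.iterate_update_of_notMem_desc hu]

theorem pathEdges_regraft_of_mem_desc {u : V} (hu : u ∈ T.desc w) :
    (T.regraft w p h).pathEdges u = (T.pathEdges u ∩ T.desc w) ∪ T.pathEdges p := by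
  ext a
  simp only [mem_pathEdges, regraft_root, T.mem_desc_regraft_of_mem_desc h hu, Set.mem_union,
    Set.mem_inter_iff]
  tauto

theorem pathEdges_regraft_subset (u : V) : (T.regraft w p h).pathEdges u ⊆ T.pathEdges u := by
  by_cases hu : u ∈ T.desc w
  · rw [T.pathEdges_regraft_of_mem_desc h hu]
    exact Set.union_subset Set.inter_subset_left
      (T.pathEdges_subset_pathEdges (T.mem_desc_trans hu h.2))
  · rw [T.pathEdges_regraft_of_notMem_desc h hu]

theorem depthV_regraft_le (u : V) : (T.regraft w p h).depthV u ≤ T.depthV u := by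
  rw [← ncard_pathEdges, ← ncard_pathEdges]
  exact Set.ncard_le_ncard (T.pathEdges_regraft_subset h u)

theorem depth_regraft_le : (T.regraft w p h).depth ≤ T.depth :=
  Finset.sup_mono_fun fun u _ => T.depthV_regraft_le h u

/-- The vertex `parent w` leaves the path of `w`. -/
theorem depthV_regraft_lt (hp : p ≠ T.parent w) : (T.regraft w p h).depthV w < T.depthV w := by
  rw [← ncard_pathEdges, ← ncard_pathEdges]
  have hpw : T.parent w ∈ T.desc p := T.parent_mem_desc h.2 (Ne.symm h.1)
  have hroot : T.parent w ≠ T.root := fun hr =>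
    hp ((T.eq_root_of_root_mem_desc (hr ▸ hpw)).trans hr.symm)
  refine Set.ncard_lt_ncard ((Set.ssubset_iff_of_subset (T.pathEdges_regraft_subset h w)).mpr
    ⟨T.parent w, ⟨hroot, T.mem_desc_parent w⟩, fun hmem => ?_⟩)
  rw [T.pathEdges_regraft_of_mem_desc h (T.mem_desc_self w)] at hmem
  rcases hmem with ⟨_, hw⟩ | ⟨_, hwp⟩
  · exact T.parent_ne_self (T.ne_root_of_isStrictAncestor h)
      (T.eq_of_mem_desc_of_mem_desc hw (T.mem_desc_parent w))
  · exact hp (T.eq_of_mem_desc_of_mem_desc hwp hpw)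

theorem isLeaf_regraft {a : V} (ha : T.IsLeaf a) : (T.regraft w p h).IsLeaf a := by
  intro z hz
  rw [regraft_parent] at hz
  by_cases hzw : z = w
  · subst hzw
    rw [Function.update_self] at hz
    subst hz
    exact absurd (ha.eq_of_mem_desc h.2).symm h.1
  · exact ha z (by rwa [Function.update_of_ne hzw] at hz)

end Regraft

/-- Once the subtree at `u` is lifted to its grandparent, the only vertex that leaves the paths
from `desc u` is `parent u`, and it still lies on the path of any leaf outside `desc u`. -/
theorem iUnion_pathEdges_subset_regraft {X : Type} {u : V} (hb : T.parent u ≠ T.root) {f : X → V}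
    (hf : ∀ x, f x ∈ T.desc (T.parent u)) (h : T.IsStrictAncestor (T.parent (T.parent u)) u)
    {Y : Set X} {y : X} (hy : y ∈ Y) (hyu : f y ∉ T.desc u) :
    ⋃ x ∈ Y, T.pathEdges (f x) ⊆ ⋃ x ∈ Y, (T.regraft u _ h).pathEdges (f x) := by
  refine Set.iUnion₂_subset fun x hx a ha => ?_
  by_cases hxu : f x ∈ T.desc u
  · have hS := T.pathEdges_regraft_of_mem_desc h hxu
    rcases T.pathEdges_subset_of_mem_desc hxu ha with ha | ha
    · exact Set.mem_iUnion₂_of_mem hx (by rw [hS]; exact Or.inl ha)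
    rw [T.pathEdges_eq_insert hb] at ha
    rcases ha with rfl | ha
    · exact Set.mem_iUnion₂_of_mem hy
        (by rw [T.pathEdges_regraft_of_notMem_desc h hyu]; exact ⟨hb, hf y⟩)
    · exact Set.mem_iUnion₂_of_mem hx (by rw [hS]; exact Or.inr ha)
  · exact Set.mem_iUnion₂_of_mem hx (by rwa [T.pathEdges_regraft_of_notMem_desc h hxu])

section Relabel

theorem semiconj_relabel {V' : Type} (e : V ≃ V') :
    Function.Semiconj e T.parent (e ∘ T.parent ∘ e.symm) :=
  fun u => by simp

variable {V' : Type} [Fintype V'] [DecidableEq V'] (e : V ≃ V')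

def relabel : RTree V' where
  root := e T.root
  parent := e ∘ T.parent ∘ e.symm
  parent_root := T.semiconj_relabel e T.root ▸ congrArg e T.parent_root
  reach w := by
    obtain ⟨n, hn⟩ := T.reach (e.symm w)
    refine ⟨n, ?_⟩
    rw [← e.apply_symm_apply w, ← (T.semiconj_relabel e).iterate_right n, hn]

theorem relabel_root : (T.relabel e).root = e T.root := rfl

theorem iterate_relabel (n : ℕ) (u : V) : (T.relabel e).parent^[n] (e u) = e (T.parent^[n] u) :=
  ((T.semiconj_relabel e).iterate_right n u).symm

theorem pathEdges_relabel (u : V) : (T.relabel e).pathEdges (e u) = e '' T.pathEdges u := by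
  ext a
  obtain ⟨a, rfl⟩ := e.surjective a
  simp only [mem_pathEdges, mem_desc, relabel_root, iterate_relabel, e.injective.mem_set_image,
    ne_eq, e.apply_eq_iff_eq]

theorem isLeaf_relabel {u : V} (hu : T.IsLeaf u) : (T.relabel e).IsLeaf (e u) := by
  intro z hz
  obtain ⟨z, rfl⟩ := e.surjective z
  have hz' : e (T.parent z) = e u := by simpa [relabel] using hz
  rw [hu z (e.injective hz')]

theorem depth_relabel_le : (T.relabel e).depth ≤ T.depth := by
  refine Finset.sup_le fun w _ => ?_
  obtain ⟨u, rfl⟩ := e.surjective w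
  rw [← ncard_pathEdges, pathEdges_relabel, Set.ncard_image_of_injective _ e.injective,
    ncard_pathEdges]
  exact Finset.le_sup (Finset.mem_univ u)

end Relabel

end RTree

theorem IsDepthDecompOn.relabel {X V V' : Type} [Fintype V] [DecidableEq V] [Fintype V']
    [DecidableEq V'] {rk : Set X → ℕ} {r : ℕ} {T : RTree V} {f : X → V}
    (hdd : IsDepthDecompOn rk r T f) (e : V ≃ V') : IsDepthDecompOn rk r (T.relabel e) (e ∘ f) := by
  obtain ⟨hleaf, hedge, hrk⟩ := hdd
  refine ⟨fun x => T.isLeaf_relabel e (hleaf x), ?_, fun Y => ?_⟩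
  · rw [← hedge, RTree.edgeCount, RTree.edgeCount, Fintype.card_congr e]
  · simp only [Function.comp_apply, RTree.pathEdges_relabel, ← Set.image_iUnion₂,
      Set.ncard_image_of_injective _ e.injective]
    exact hrk Y

def IsSubmodular {X : Type} (rk : Set X → ℕ) : Prop :=
  ∀ A B : Set X, rk (A ∪ B) + rk (A ∩ B) ≤ rk A + rk B

theorem isSubmodular_vecRk (F : Type) {W ι : Type} [Field F] [AddCommGroup W] [Module F W]
    [Finite ι] (v : ι → W) : IsSubmodular (vecRk F v) := by
  intro A B
  have hfin : ∀ C : Set ι, FiniteDimensional F (Submodule.span F (v '' C)) := fun C =>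
    FiniteDimensional.span_of_finite F (Set.toFinite _)
  unfold vecRk
  rw [Set.image_union, Submodule.span_union,
    ← Submodule.finrank_sup_add_finrank_inf_eq (Submodule.span F (v '' A))]
  exact Nat.add_le_add_left (Submodule.finrank_mono (le_inf
    (Submodule.span_mono (Set.image_mono Set.inter_subset_left))
    (Submodule.span_mono (Set.image_mono Set.inter_subset_right)))) _

section DepthDecomp

variable {X V : Type} [Fintype V] [DecidableEq V] {rk : Set X → ℕ} {T : RTree V} {f : X → V}

theorem IsDepthDecompOn.rk_le_ncard_desc_add_depthV {r : ℕ} (hdd : IsDepthDecompOn rk r T f)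
    (u : V) : rk {x | f x ∈ T.desc u} ≤ (T.desc u).ncard + T.depthV (T.parent u) := by
  refine (hdd.2.2 _).trans ?_
  rw [← T.ncard_pathEdges]
  refine (Set.ncard_le_ncard ?_ (Set.toFinite _)).trans (Set.ncard_union_le _ _)
  exact Set.iUnion₂_subset fun x hx =>
    (T.pathEdges_subset_of_mem_desc hx).trans (Set.union_subset_union_left _ Set.inter_subset_right)

/-- Submodularity applied to `Y ∪ Ŝᶜ` and `Ŝ = {x | f x ∈ desc u}`: the paths of the elements
of `Ŝᶜ` avoid `desc u`, so together they use at most `rk univ - |desc u|` edges. -/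
theorem IsDepthDecompOn.rk_add_ncard_desc_le (hrk : IsSubmodular rk)
    (hdd : IsDepthDecompOn rk (rk Set.univ) T f) {u : V} (hu : u ≠ T.root) {Y : Set X}
    (hY : ∀ x ∈ Y, f x ∈ T.desc u) :
    rk Y + (T.desc u).ncard ≤
      (⋃ x ∈ Y, T.pathEdges (f x) ∩ T.desc u).ncard + rk {x | f x ∈ T.desc u} := by
  set P := {x | f x ∈ T.desc u}
  have hsub := hrk (Y ∪ Pᶜ) P
  rw [Set.union_assoc, Set.compl_union_self, Set.union_univ, Set.union_inter_distrib_right,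
    Set.compl_inter_self, Set.union_empty, (Set.inter_eq_left.mpr hY : Y ∩ P = Y)] at hsub
  have hroot : T.desc u ⊆ {T.root}ᶜ := fun a ha hr => hu (T.eq_root_of_root_mem_desc (hr ▸ ha))
  have hcover : (⋃ x ∈ Y ∪ Pᶜ, T.pathEdges (f x)) ⊆
      (⋃ x ∈ Y, T.pathEdges (f x) ∩ T.desc u) ∪ ({T.root}ᶜ \ T.desc u) := by
    refine Set.iUnion₂_subset fun x hx a ha => ?_
    by_cases hau : a ∈ T.desc u
    · have hxY : x ∈ Y := hx.resolve_right fun hxP => hxP (T.mem_desc_trans ha.2 hau)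
      exact Or.inl (Set.mem_iUnion₂_of_mem hxY ⟨ha, hau⟩)
    · exact Or.inr ⟨ha.1, hau⟩
  have hcompl : ({T.root}ᶜ : Set V).ncard = rk Set.univ := by
    rw [Set.ncard_compl, Set.ncard_singleton, Nat.card_eq_fintype_card, ← hdd.2.1]
    rfl
  have hval := (hdd.2.2 (Y ∪ Pᶜ)).trans
    ((Set.ncard_le_ncard hcover).trans (Set.ncard_union_le _ _))
  have hdiff := Set.ncard_sdiff hroot
  have hle := Set.ncard_le_ncard hroot
  omega

theorem IsDepthDecompOn.regraft_grandparent (hrk : IsSubmodular rk)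
    (hdd : IsDepthDecompOn rk (rk Set.univ) T f) {u : V} (hu : u ≠ T.root)
    (hb : T.parent u ≠ T.root) (hf : ∀ x, f x ∈ T.desc (T.parent u))
    (hlt : rk {x | f x ∈ T.desc u} < (T.desc u).ncard + T.depthV (T.parent u))
    (h : T.IsStrictAncestor (T.parent (T.parent u)) u) :
    IsDepthDecompOn rk (rk Set.univ) (T.regraft u _ h) f := by
  refine ⟨fun x => T.isLeaf_regraft h (hdd.1 x), hdd.2.1, fun Y => ?_⟩
  by_cases hY : ∃ y ∈ Y, f y ∉ T.desc u
  · obtain ⟨y, hy, hyu⟩ := hY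
    exact (hdd.2.2 Y).trans (Set.ncard_le_ncard (T.iUnion_pathEdges_subset_regraft hb hf h hy hyu))
  push Not at hY
  rcases Y.eq_empty_or_nonempty with rfl | ⟨x₀, hx₀⟩
  · simpa using hdd.2.2 ∅
  have hS : ∀ x ∈ Y, (T.regraft u _ h).pathEdges (f x) =
      (T.pathEdges (f x) ∩ T.desc u) ∪ T.pathEdges (T.parent (T.parent u)) :=
    fun x hx => T.pathEdges_regraft_of_mem_desc h (hY x hx)
  have hsub : (⋃ x ∈ Y, T.pathEdges (f x) ∩ T.desc u) ∪ T.pathEdges (T.parent (T.parent u)) ⊆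
      ⋃ x ∈ Y, (T.regraft u _ h).pathEdges (f x) := by
    refine Set.union_subset (Set.iUnion₂_mono fun x hx => ?_)
      (Set.subset_iUnion₂_of_subset x₀ hx₀ ?_)
    · rw [hS x hx]; exact Set.subset_union_left
    · rw [hS x₀ hx₀]; exact Set.subset_union_right
  have hdisj : Disjoint (⋃ x ∈ Y, T.pathEdges (f x) ∩ T.desc u)
      (T.pathEdges (T.parent (T.parent u))) := by
    refine Set.disjoint_left.mpr fun a ha ha' => T.notMem_desc_of_isStrictAncestor h ?_
    obtain ⟨x, -, -, hau⟩ := Set.mem_iUnion₂.mp ha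
    exact T.mem_desc_trans ha'.2 hau
  have hdepth : (T.pathEdges (T.parent (T.parent u))).ncard + 1 = T.depthV (T.parent u) := by
    rw [T.ncard_pathEdges, T.depthV_parent_add_one hb]
  have hcard := Set.ncard_le_ncard hsub
  rw [Set.ncard_union_eq hdisj] at hcard
  have key := hdd.rk_add_ncard_desc_le hrk hu hY
  omega

theorem IsDepthDecompOn.exists_lift_of_not_atCapacity (hrk : IsSubmodular rk)
    (hdd : IsDepthDecompOn rk (rk Set.univ) T f) {u : V}
    (hu : u ≠ T.root) (hf : ∀ x, f x ∈ T.desc (T.parent u)) (hcap : ¬ AtCapacity rk T f u) :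
    ∃ T' : RTree V, IsDepthDecompOn rk (rk Set.univ) T' f ∧ T'.depth ≤ T.depth ∧
      ∑ v, T'.depthV v < ∑ v, T.depthV v := by
  have hlt := lt_of_le_of_ne (hdd.rk_le_ncard_desc_add_depthV u) hcap
  -- `|desc u| ≤ rk Ŝ < |desc u| + depth (parent u)`, so `parent u` is not the root
  have hlow := hdd.rk_add_ncard_desc_le hrk hu (Y := ∅) (by simp)
  simp only [Set.mem_empty_iff_false, Set.iUnion_of_empty, Set.iUnion_empty, Set.ncard_empty,
    zero_add] at hlow
  have hb : T.parent u ≠ T.root := by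
    intro hb
    rw [hb, T.depthV_root] at hlt
    omega
  have h : T.IsStrictAncestor (T.parent (T.parent u)) u :=
    ⟨fun he => hu (T.eq_root_of_iterate_eq_self two_pos he), 2, rfl⟩
  exact ⟨T.regraft u _ h, hdd.regraft_grandparent hrk hu hb hf hlt h, T.depth_regraft_le h,
    Finset.sum_lt_sum (fun v _ => T.depthV_regraft_le h v)
      ⟨u, Finset.mem_univ u, T.depthV_regraft_lt h (T.parent_ne_self hb)⟩⟩

end DepthDecomp

theorem IsDepthDecompOn.exists_primary_atCapacity {X V : Type} [Fintype V] [DecidableEq V]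
    {rk : Set X → ℕ} (hrk : IsSubmodular rk) {T : RTree V}
    {f : X → V} (hdd : IsDepthDecompOn rk (rk Set.univ) T f) :
    ∃ T' : RTree V, IsDepthDecompOn rk (rk Set.univ) T' f ∧ T'.depth ≤ T.depth ∧
      ∀ u, T'.IsPrimaryBranch u → AtCapacity rk T' f u := by
  by_cases hcap : ∀ u, T.IsPrimaryBranch u → AtCapacity rk T f u
  · exact ⟨T, hdd, le_rfl, hcap⟩
  push Not at hcap
  obtain ⟨u, hu, hu'⟩ := hcap
  obtain ⟨T₁, hdd₁, hdepth₁, hlt⟩ :=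
    hdd.exists_lift_of_not_atCapacity hrk hu.1 (fun x => hu.mem_desc_parent_of_isLeaf (hdd.1 x)) hu'
  obtain ⟨T₂, hdd₂, hdepth₂, hcap₂⟩ := hdd₁.exists_primary_atCapacity hrk
  exact ⟨T₂, hdd₂, hdepth₂.trans hdepth₁, hcap₂⟩
termination_by ∑ v, T.depthV v

/-- Lemma: primary branches can be brought to capacity. Let `(T, f)`
be a depth-decomposition of a vector matroid of depth `d`.  Then there exists a
depth-decomposition `(T', f')` of the matroid of depth at most `d` in which every
primary branch is at capacity. -/
theorem exists_depthDecomp_primary_atCapacity (F W ι : Type) [Field F] [AddCommGroup W]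
    [Module F W] [Fintype ι] (v : ι → W) {V : Type} [Fintype V] [DecidableEq V]
    (T : RTree V) (f : ι → V)
    (hdd : IsDepthDecompOn (vecRk F v) (vecRk F v Set.univ) T f)
    (d : ℕ) (hd : T.depth = d) :
    ∃ (nV : ℕ) (T' : RTree (Fin (nV + 1))) (f' : ι → Fin (nV + 1)),
      IsDepthDecompOn (vecRk F v) (vecRk F v Set.univ) T' f' ∧ T'.depth ≤ d ∧
      ∀ u' : Fin (nV + 1), T'.IsPrimaryBranch u' → AtCapacity (vecRk F v) T' f' u' := by
  have hcard : Fintype.card V = Fintype.card V - 1 + 1 :=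
    (Nat.sub_add_cancel (Fintype.card_pos_iff.mpr ⟨T.root⟩)).symm
  let e := Fintype.equivFinOfCardEq hcard
  obtain ⟨T', hdd', hdepth', hcap'⟩ :=
    (hdd.relabel e).exists_primary_atCapacity (isSubmodular_vecRk F v)
  exact ⟨_, T', e ∘ f, hdd', hdepth'.trans ((T.depth_relabel_le e).trans hd.le), hcap'⟩
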